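/- arXiv:2605.25807 — 5 statements merged into one kernel-verified Lean document; each statement's English description precedes it below -/
import Mathlib

section
/- If a closed language J ⊆ L is CA-D-observable with respect to Φ, then J is CA-observable with respect to Φ. -/
theorem stmt1_general {A B : Type*} (L J : Set (List A)) (Φ : List A → Set (List B))
    (hJL : J ⊆ L)
    (hJpc : ∀ u w : List A, u <+: w → w ∈ J → u ∈ J)
    (hΦ : ∀ w ∈ L, (Φ w).Nonempty)
    (hCADO : ∀ w ∈ J, ∀ w' ∈ J, ∀ σ : A,
      w ++ [σ] ∈ J → w' ++ [σ] ∈ L → w' ++ [σ] ∉ J → Φ w ∩ Φ w' = ∅) :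
    ∀ (w : List A) (σ : A), w ++ [σ] ∈ J →
      ∃ v ∈ Φ w, ∀ w' ∈ L, v ∈ Φ w' →
        w' ∈ J → w' ++ [σ] ∈ L → w' ++ [σ] ∈ J := by
  intro w σ hwσJ
  have hwJ : w ∈ J := hJpc w _ (List.prefix_append w [σ]) hwσJ
  obtain ⟨v, hv⟩ := hΦ w (hJL hwJ)
  refine ⟨v, hv, fun w' _ hv' hw'J hw'σL => ?_⟩
  by_contra hw'σJ
  have hdisjoint : Φ w ∩ Φ w' = ∅ := hCADO w hwJ w' hw'J σ hwσJ hw'σL hw'σJ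
  exact hdisjoint.subset ⟨hv, hv'⟩

/-- CA-D-observable implies CA-observable. -/
theorem stmt1 {A B : Type*} (L J : Set (List A)) (Φ : List A → Set (List B))
    (hJL : J ⊆ L)
    (hLpc : ∀ u w : List A, u <+: w → w ∈ L → u ∈ L)
    (hJpc : ∀ u w : List A, u <+: w → w ∈ J → u ∈ J)
    (hΦ : ∀ w ∈ L, (Φ w).Nonempty)
    (hCADO : ∀ w ∈ J, ∀ w' ∈ J, ∀ σ : A,
      w ++ [σ] ∈ J → w' ++ [σ] ∈ L → w' ++ [σ] ∉ J → Φ w ∩ Φ w' = ∅) :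
    ∀ (w : List A) (σ : A), w ++ [σ] ∈ J →
      ∃ v ∈ Φ w, ∀ w' ∈ L, v ∈ Φ w' →
        w' ∈ J → w' ++ [σ] ∈ L → w' ++ [σ] ∈ J :=
  stmt1_general L J Φ hJL hJpc hΦ hCADO
end

section
/- If a closed language J ⊆ L is CA-D-observable with respect to Φ, then J is CA-S-observable with respect to Φ. -/
theorem stmt2_general {A B : Type*} (L J : Set (List A)) (Φ : List A → Set (List B))
    (hJL : J ⊆ L)
    (hΦ : ∀ w ∈ L, (Φ w).Nonempty)
    (hCADO : ∀ w ∈ J, ∀ w' ∈ J, ∀ σ : A,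
      w ++ [σ] ∈ J → w' ++ [σ] ∈ L → w' ++ [σ] ∉ J → Φ w ∩ Φ w' = ∅) :
    ∀ w ∈ J, ∀ σ : A, w ++ [σ] ∈ L →
      (∀ v ∈ Φ w, ∃ w' ∈ J, v ∈ Φ w' ∧ w' ++ [σ] ∈ J) →
      w ++ [σ] ∈ J := by
  intro w hw σ hwσ hcover
  by_contra hwσJ
  obtain ⟨v, hv⟩ := hΦ w (hJL hw)
  obtain ⟨w', hw', hv', hw'σ⟩ := hcover v hv
  have hdisjoint := hCADO w' hw' w hw σ hw'σ hwσ hwσJ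
  exact (hdisjoint.subset ⟨hv', hv⟩ : v ∈ (∅ : Set (List B)))

/-- CA-D-observable implies CA-S-observable. -/
theorem stmt2 {A B : Type*} (L J : Set (List A)) (Φ : List A → Set (List B))
    (hJL : J ⊆ L)
    (hLpc : ∀ u w : List A, u <+: w → w ∈ L → u ∈ L)
    (hJpc : ∀ u w : List A, u <+: w → w ∈ J → u ∈ J)
    (hΦ : ∀ w ∈ L, (Φ w).Nonempty)
    (hCADO : ∀ w ∈ J, ∀ w' ∈ J, ∀ σ : A,
      w ++ [σ] ∈ J → w' ++ [σ] ∈ L → w' ++ [σ] ∉ J → Φ w ∩ Φ w' = ∅) :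
    ∀ w ∈ J, ∀ σ : A, w ++ [σ] ∈ L →
      (∀ v ∈ Φ w, ∃ w' ∈ J, v ∈ Φ w' ∧ w' ++ [σ] ∈ J) →
      w ++ [σ] ∈ J :=
  stmt2_general L J Φ hJL hΦ hCADO
end

section
/- If a prefix-closed language J ⊆ L is CA-D-observable with respect to Φ, then for all w ∈ Σ* and σ ∈ Σ: wσ ∈ J if and only if w ∈ J, wσ ∈ L, and for all v ∈ Φ(w) and all w' ∈ Φ⁻¹(v), w' ∈ J and w'σ ∈ L imply w'σ ∈ J. -/
/-! If `wσ ∈ J`, then `w ∈ J` by prefix-closure and `wσ ∈ L` since `J ⊆ L`; any `w' ∈ J` sharing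
an observation with `w` and with `w'σ ∈ L` must have `w'σ ∈ J`, for otherwise CA-D-observability
would force `Φ w ∩ Φ w' = ∅`. Conversely, `Φ w` is nonempty, and the enabling condition applied
with `w' = w` gives `wσ ∈ J`. -/

def IsCADObservable {A B : Type*} (L J : Set (List A)) (Φ : List A → Set (List B)) : Prop :=
  ∀ w ∈ J, ∀ w' ∈ J, ∀ σ : A,
    w ++ [σ] ∈ J → w' ++ [σ] ∈ L → w' ++ [σ] ∉ J → Φ w ∩ Φ w' = ∅

theorem IsCADObservable.append_mem {A B : Type*} {L J : Set (List A)} {Φ : List A → Set (List B)}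
    (hJ : IsCADObservable L J Φ) {w w' : List A} {σ : A} {v : List B}
    (hw : w ∈ J) (hwσ : w ++ [σ] ∈ J) (hw' : w' ∈ J) (hw'σ : w' ++ [σ] ∈ L)
    (hv : v ∈ Φ w) (hv' : v ∈ Φ w') : w' ++ [σ] ∈ J := by
  by_contra hw'σJ
  have hdisj : Φ w ∩ Φ w' = ∅ := hJ w hw w' hw' σ hwσ hw'σ hw'σJ
  exact Set.eq_empty_iff_forall_notMem.mp hdisj v ⟨hv, hv'⟩

theorem stmt6_general {A B : Type*} (L J : Set (List A)) (Φ : List A → Set (List B))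
    (hJL : J ⊆ L)
    (hJpc : ∀ u w : List A, u <+: w → w ∈ J → u ∈ J)
    (hΦ : ∀ w ∈ L, (Φ w).Nonempty)
    (hCADO : ∀ w ∈ J, ∀ w' ∈ J, ∀ σ : A,
      w ++ [σ] ∈ J → w' ++ [σ] ∈ L → w' ++ [σ] ∉ J → Φ w ∩ Φ w' = ∅) :
    ∀ (w : List A) (σ : A),
      w ++ [σ] ∈ J ↔
        (w ∈ J ∧ w ++ [σ] ∈ L ∧
         ∀ v ∈ Φ w, ∀ w' ∈ L, v ∈ Φ w' →
           w' ∈ J → w' ++ [σ] ∈ L → w' ++ [σ] ∈ J) := by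
  have hobs : IsCADObservable L J Φ := hCADO
  intro w σ
  constructor
  · intro hwσ
    have hw : w ∈ J := hJpc w (w ++ [σ]) (List.prefix_append w [σ]) hwσ
    exact ⟨hw, hJL hwσ, fun v hv w' _ hv' hw' hw'σ => hobs.append_mem hw hwσ hw' hw'σ hv hv'⟩
  · rintro ⟨hw, hwσ, henable⟩
    obtain ⟨v, hv⟩ := hΦ w (hJL hw)
    exact henable v hv w (hJL hw) hv hw hwσ

/-- if J is CA-D-observable, then wσ ∈ J iff w ∈ J, wσ ∈ L and
every observation v ∈ Φ(w) permissively enables σ. -/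
theorem stmt6 {A B : Type*} (L J : Set (List A)) (Φ : List A → Set (List B))
    (hJL : J ⊆ L)
    (hLpc : ∀ u w : List A, u <+: w → w ∈ L → u ∈ L)
    (hJpc : ∀ u w : List A, u <+: w → w ∈ J → u ∈ J)
    (hJne : J.Nonempty)
    (hΦ : ∀ w ∈ L, (Φ w).Nonempty)
    (hCADO : ∀ w ∈ J, ∀ w' ∈ J, ∀ σ : A,
      w ++ [σ] ∈ J → w' ++ [σ] ∈ L → w' ++ [σ] ∉ J → Φ w ∩ Φ w' = ∅) :
    ∀ (w : List A) (σ : A),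
      w ++ [σ] ∈ J ↔
        (w ∈ J ∧ w ++ [σ] ∈ L ∧
         ∀ v ∈ Φ w, ∀ w' ∈ L, v ∈ Φ w' →
           w' ∈ J → w' ++ [σ] ∈ L → w' ++ [σ] ∈ J) :=
  stmt6_general L J Φ hJL hJpc hΦ hCADO
end

section
/- If J is CA-D-controllable and CA-D-observable, then the state-estimate-based permissive supervisor S_p satisfies L_a(S_p^a/G) = L_r(S_p^a/G) = J; in language terms, the supervisor defined by S_p(v) = {σ ∈ Σ : ∀ w ∈ Φ⁻¹(v), w ∈ J ∧ wσ ∈ L(G) ⟹ wσ ∈ J} achieves both the large and small languages equal to J. -/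
/-!
The permissive supervisor `S_p` enables `σ` at an observation `v` exactly when no word of `J`
consistent with `v` leaves `J` through `σ`. Hence every step the attacked supervisor may enable is
either allowed by `S_p` (and stays in `J` by construction) or is uncontrollable or attackable (and
stays in `J` by CA-D-controllability), so `L_a ⊆ J`. Conversely, CA-D-observability says that no
observation of a word of `J` is shared with a word where `σ` leaves `J`, so each extension `wσ ∈ J`
is enabled at every estimate of `w`; since `σ ∉ Σ_c^a`, no attack can remove it, so `J ⊆ L_r`.
Finally `L_r ⊆ L_a` because estimates are nonempty.
-/

/-- The large language `L_a(S^a/G)` of supervisor `S` under cyber-attacks. -/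
inductive LargeL {A B : Type*} (L : Set (List A)) (Suc Sca : Set A)
    (Φ : List A → Set (List B)) (S : List B → Set A) : List A → Prop
  | nil : LargeL L Suc Sca Φ S []
  | snoc (w : List A) (σ : A) :
      LargeL L Suc Sca Φ S w → w ++ [σ] ∈ L →
      (σ ∈ Suc ∨ ∃ v ∈ Φ w, ∃ γ' γ'' : Set A,
        γ' ⊆ Sca ∧ γ'' ⊆ Sca ∧ σ ∈ (S v \ γ') ∪ γ'') →
      LargeL L Suc Sca Φ S (w ++ [σ])

/-- The small language `L_r(S^a/G)` of supervisor `S` under cyber-attacks. -/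
inductive SmallL {A B : Type*} (L : Set (List A)) (Suc Sca : Set A)
    (Φ : List A → Set (List B)) (S : List B → Set A) : List A → Prop
  | nil : SmallL L Suc Sca Φ S []
  | snoc (w : List A) (σ : A) :
      SmallL L Suc Sca Φ S w → w ++ [σ] ∈ L →
      (σ ∈ Suc ∨ ∀ v ∈ Φ w, ∀ γ' γ'' : Set A,
        γ' ⊆ Sca → γ'' ⊆ Sca → σ ∈ (S v \ γ') ∪ γ'') →
      SmallL L Suc Sca Φ S (w ++ [σ])

section Supervisor

variable {A B : Type*} {L J : Set (List A)} {Suc Sca : Set A} {Φ : List A → Set (List B)}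
  {S : List B → Set A}

theorem LargeL.mem_of_safe (hnil : [] ∈ J)
    (hctrl : ∀ w ∈ J, ∀ σ ∈ Suc ∪ Sca, w ++ [σ] ∈ L → w ++ [σ] ∈ J)
    (hsafe : ∀ w ∈ J, ∀ v ∈ Φ w, ∀ σ ∈ S v, w ++ [σ] ∈ L → w ++ [σ] ∈ J)
    {w : List A} (h : LargeL L Suc Sca Φ S w) : w ∈ J := by
  induction h with
  | nil => exact hnil
  | snoc w σ _ hwσ hσ hw =>
    rcases hσ with hσ | ⟨v, hv, γ', γ'', -, hγ'', ⟨hσ, -⟩ | hσ⟩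
    · exact hctrl w hw σ (Or.inl hσ) hwσ
    · exact hsafe w hw v hv σ hσ hwσ
    · exact hctrl w hw σ (Or.inr (hγ'' hσ)) hwσ

theorem SmallL.of_mem (hJL : J ⊆ L) (hJpc : ∀ w σ, w ++ [σ] ∈ J → w ∈ J)
    (henabled : ∀ w σ, w ++ [σ] ∈ J → ∀ v ∈ Φ w, σ ∈ S v)
    (hunattacked : ∀ w σ, w ++ [σ] ∈ J → σ ∉ Sca) {w : List A} (hw : w ∈ J) :
    SmallL L Suc Sca Φ S w := by
  induction w using List.reverseRecOn with
  | nil => exact .nil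
  | append_singleton w σ ih =>
    refine .snoc w σ (ih (hJpc w σ hw)) (hJL hw) (Or.inr ?_)
    intro v hv γ' γ'' hγ' _
    exact Or.inl ⟨henabled w σ hw v hv, fun hσ => hunattacked w σ hw (hγ' hσ)⟩

theorem SmallL.mem (hnil : [] ∈ L) {w : List A} (h : SmallL L Suc Sca Φ S w) : w ∈ L := by
  cases h with
  | nil => exact hnil
  | snoc w σ _ hwσ _ => exact hwσ

theorem SmallL.largeL (hnil : [] ∈ L) (hΦ : ∀ w ∈ L, (Φ w).Nonempty) {w : List A}
    (h : SmallL L Suc Sca Φ S w) : LargeL L Suc Sca Φ S w := by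
  induction h with
  | nil => exact .nil
  | snoc w σ hw hwσ hσ ih =>
    refine .snoc w σ ih hwσ (hσ.imp_right fun hσ => ?_)
    obtain ⟨v, hv⟩ := hΦ w (hw.mem hnil)
    exact ⟨v, hv, ∅, ∅, Set.empty_subset _, Set.empty_subset _,
      hσ v hv ∅ ∅ (Set.empty_subset _) (Set.empty_subset _)⟩

end Supervisor

section Permissive

variable {A B : Type*} (L J : Set (List A)) (Φ : List A → Set (List B))

def permissiveSupervisor (v : List B) : Set A :=
  {σ | ∀ w ∈ L, v ∈ Φ w → w ∈ J → w ++ [σ] ∈ L → w ++ [σ] ∈ J}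

variable {L J Φ}

theorem permissiveSupervisor_safe (hJL : J ⊆ L) {w : List A} (hw : w ∈ J) {v : List B}
    (hv : v ∈ Φ w) {σ : A} (hσ : σ ∈ permissiveSupervisor L J Φ v) (hwσ : w ++ [σ] ∈ L) :
    w ++ [σ] ∈ J :=
  hσ w (hJL hw) hv hw hwσ

theorem mem_permissiveSupervisor_of_observable
    (hobs : ∀ w ∈ J, ∀ w' ∈ J, ∀ σ : A,
      w ++ [σ] ∈ J → w' ++ [σ] ∈ L → w' ++ [σ] ∉ J → Φ w ∩ Φ w' = ∅)
    {w : List A} (hw : w ∈ J) {σ : A} (hwσ : w ++ [σ] ∈ J) {v : List B} (hv : v ∈ Φ w) :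
    σ ∈ permissiveSupervisor L J Φ v := by
  intro w' _ hv' hw' hw'σ
  by_contra hleave
  have hdisj := hobs w hw w' hw' σ hwσ hw'σ hleave
  exact (Set.eq_empty_iff_forall_notMem.mp hdisj) v ⟨hv, hv'⟩

end Permissive

theorem stmt12_general {A B : Type*} (L J : Set (List A)) (Suc Sca : Set A)
    (Φ : List A → Set (List B))
    (hJL : J ⊆ L)
    (hJpc : ∀ u w : List A, u <+: w → w ∈ J → u ∈ J)
    (hJne : ([] : List A) ∈ J)
    (hΦ : ∀ w ∈ L, (Φ w).Nonempty)
    -- CA-D-controllability: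
    (hCADC1 : ∀ w ∈ J, ∀ σ ∈ Suc ∪ Sca, w ++ [σ] ∈ L → w ++ [σ] ∈ J)
    (hCADC2 : ∀ w ∈ J, ∀ σ ∈ w, σ ∉ Sca)
    -- CA-D-observability:
    (hCADO : ∀ w ∈ J, ∀ w' ∈ J, ∀ σ : A,
      w ++ [σ] ∈ J → w' ++ [σ] ∈ L → w' ++ [σ] ∉ J → Φ w ∩ Φ w' = ∅) :
    (∀ w : List A,
      LargeL L Suc Sca Φ
        (fun v => {σ : A | ∀ w' ∈ L, v ∈ Φ w' →
          w' ∈ J → w' ++ [σ] ∈ L → w' ++ [σ] ∈ J}) w ↔ w ∈ J) ∧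
    (∀ w : List A,
      SmallL L Suc Sca Φ
        (fun v => {σ : A | ∀ w' ∈ L, v ∈ Φ w' →
          w' ∈ J → w' ++ [σ] ∈ L → w' ++ [σ] ∈ J}) w ↔ w ∈ J) := by
  have hJpc' : ∀ w σ, w ++ [σ] ∈ J → w ∈ J := fun w σ => hJpc w _ (List.prefix_append w [σ])
  have hlarge_sub {w} (h : LargeL L Suc Sca Φ (permissiveSupervisor L J Φ) w) : w ∈ J :=
    h.mem_of_safe hJne hCADC1 fun _ hw _ hv _ hσ => permissiveSupervisor_safe hJL hw hv hσ
  have hsub_small {w} (hw : w ∈ J) : SmallL L Suc Sca Φ (permissiveSupervisor L J Φ) w :=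
    SmallL.of_mem hJL hJpc'
      (fun w σ hwσ _ hv =>
        mem_permissiveSupervisor_of_observable hCADO (hJpc' w σ hwσ) hwσ hv)
      (fun w σ hwσ => hCADC2 _ hwσ σ (List.mem_append_right w (List.mem_singleton_self σ))) hw
  have hsmall_large {w} (h : SmallL L Suc Sca Φ (permissiveSupervisor L J Φ) w) :
      LargeL L Suc Sca Φ (permissiveSupervisor L J Φ) w :=
    h.largeL (hJL hJne) hΦ
  exact ⟨fun w => ⟨hlarge_sub, fun hw => hsmall_large (hsub_small hw)⟩,
    fun w => ⟨fun h => hlarge_sub (hsmall_large h), hsub_small⟩⟩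

/-- if J is CA-D-controllable and CA-D-observable, then the
state-estimate-based permissive supervisor S_p achieves
L_a(S_p^a/G) = L_r(S_p^a/G) = J. -/
theorem stmt12 {A B : Type*} (L J : Set (List A)) (Suc Sca : Set A)
    (Φ : List A → Set (List B))
    (hJL : J ⊆ L)
    (hLpc : ∀ u w : List A, u <+: w → w ∈ L → u ∈ L)
    (hJpc : ∀ u w : List A, u <+: w → w ∈ J → u ∈ J)
    (hJne : ([] : List A) ∈ J)
    (hdisj : Suc ∩ Sca = ∅)
    (hΦ : ∀ w ∈ L, (Φ w).Nonempty)
    -- CA-D-controllability: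
    (hCADC1 : ∀ w ∈ J, ∀ σ ∈ Suc ∪ Sca, w ++ [σ] ∈ L → w ++ [σ] ∈ J)
    (hCADC2 : ∀ w ∈ J, ∀ σ ∈ w, σ ∉ Sca)
    -- CA-D-observability:
    (hCADO : ∀ w ∈ J, ∀ w' ∈ J, ∀ σ : A,
      w ++ [σ] ∈ J → w' ++ [σ] ∈ L → w' ++ [σ] ∉ J → Φ w ∩ Φ w' = ∅) :
    (∀ w : List A,
      LargeL L Suc Sca Φ
        (fun v => {σ : A | ∀ w' ∈ L, v ∈ Φ w' →
          w' ∈ J → w' ++ [σ] ∈ L → w' ++ [σ] ∈ J}) w ↔ w ∈ J) ∧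
    (∀ w : List A,
      SmallL L Suc Sca Φ
        (fun v => {σ : A | ∀ w' ∈ L, v ∈ Φ w' →
          w' ∈ J → w' ++ [σ] ∈ L → w' ++ [σ] ∈ J}) w ↔ w ∈ J) :=
  stmt12_general L J Suc Sca Φ hJL hJpc hJne hΦ hCADC1 hCADC2 hCADO
end

section
/- If there exists a supervisor S with L_a(S^a/G) = L_r(S^a/G) = J, then J is CA-D-observable: for all w, w' ∈ J and σ ∈ Σ, wσ ∈ J, w'σ ∈ L(G), w'σ ∉ J imply Φ(w) ∩ Φ(w') = ∅, provided J is CA-D-controllable. -/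
/-!
If `wσ` survives in the small language with `σ` controllable, then `σ` is enabled by every
observation of `w`, so in particular by `S v` for any `v ∈ Φ w` (take no attack, `γ' = γ'' = ∅`).
If `v` were also an observation of `w' ∈ J`, this enabling would put `w'σ` in the large language,
hence in `J`. Uncontrollable `σ` are handled directly by controllability of `J`.
-/

section Supervision

variable {A B : Type*} {L : Set (List A)} {Suc Sca : Set A}
  {Φ : List A → Set (List B)} {S : List B → Set A}

theorem SmallL.mem_supervisor_of_snoc {w : List A} {σ : A}
    (h : SmallL L Suc Sca Φ S (w ++ [σ])) (hσ : σ ∉ Suc) {v : List B} (hv : v ∈ Φ w) :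
    σ ∈ S v := by
  generalize hu : w ++ [σ] = u at h
  cases h with
  | nil => simp at hu
  | snoc w₀ σ₀ _ _ henabled =>
    obtain ⟨rfl, rfl⟩ : w = w₀ ∧ σ = σ₀ := by simpa using List.append_inj' hu rfl
    rcases henabled with hσ₀ | hall
    · exact absurd hσ₀ hσ
    · simpa using hall v hv ∅ ∅ (Set.empty_subset _) (Set.empty_subset _)

theorem LargeL.snoc_of_mem_supervisor {w : List A} {σ : A} {v : List B}
    (h : LargeL L Suc Sca Φ S w) (hL : w ++ [σ] ∈ L) (hv : v ∈ Φ w) (hσ : σ ∈ S v) :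
    LargeL L Suc Sca Φ S (w ++ [σ]) :=
  .snoc w σ h hL <| .inr ⟨v, hv, ∅, ∅, Set.empty_subset _, Set.empty_subset _, by simpa using hσ⟩

end Supervision

theorem stmt13_general {A B : Type*} (L J : Set (List A)) (Suc Sca : Set A)
    (Φ : List A → Set (List B)) (S : List B → Set A)
    (hLa : ∀ w : List A, LargeL L Suc Sca Φ S w ↔ w ∈ J)
    (hLr : ∀ w : List A, SmallL L Suc Sca Φ S w ↔ w ∈ J)
    -- CA-D-controllability:
    (hCADC1 : ∀ w ∈ J, ∀ σ ∈ Suc ∪ Sca, w ++ [σ] ∈ L → w ++ [σ] ∈ J) :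
    ∀ w ∈ J, ∀ w' ∈ J, ∀ σ : A,
      w ++ [σ] ∈ J → w' ++ [σ] ∈ L → w' ++ [σ] ∉ J → Φ w ∩ Φ w' = ∅ := by
  intro w _ w' hw' σ hwσ hw'σL hw'σJ
  by_cases hσ : σ ∈ Suc
  · exact absurd (hCADC1 w' hw' σ (.inl hσ) hw'σL) hw'σJ
  refine Set.eq_empty_of_forall_notMem fun v ⟨hv, hv'⟩ => hw'σJ ?_
  have hσS : σ ∈ S v := ((hLr _).2 hwσ).mem_supervisor_of_snoc hσ hv
  exact (hLa _).1 <| ((hLa _).2 hw').snoc_of_mem_supervisor hw'σL hv' hσS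

/-- if some supervisor S satisfies
L_a(S^a/G) = L_r(S^a/G) = J and J is CA-D-controllable,
then J is CA-D-observable. -/
theorem stmt13 {A B : Type*} (L J : Set (List A)) (Suc Sca : Set A)
    (Φ : List A → Set (List B)) (S : List B → Set A)
    (hJL : J ⊆ L)
    (hLpc : ∀ u w : List A, u <+: w → w ∈ L → u ∈ L)
    (hJpc : ∀ u w : List A, u <+: w → w ∈ J → u ∈ J)
    (hJne : ([] : List A) ∈ J)
    (hdisj : Suc ∩ Sca = ∅)
    (hΦ : ∀ w ∈ L, (Φ w).Nonempty)
    (hLa : ∀ w : List A, LargeL L Suc Sca Φ S w ↔ w ∈ J)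
    (hLr : ∀ w : List A, SmallL L Suc Sca Φ S w ↔ w ∈ J)
    -- CA-D-controllability:
    (hCADC1 : ∀ w ∈ J, ∀ σ ∈ Suc ∪ Sca, w ++ [σ] ∈ L → w ++ [σ] ∈ J)
    (hCADC2 : ∀ w ∈ J, ∀ σ ∈ w, σ ∉ Sca) :
    ∀ w ∈ J, ∀ w' ∈ J, ∀ σ : A,
      w ++ [σ] ∈ J → w' ++ [σ] ∈ L → w' ++ [σ] ∉ J → Φ w ∩ Φ w' = ∅ :=
  stmt13_general L J Suc Sca Φ S hLa hLr hCADC1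
end
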